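/- On the ribbon basis, B_q(R_I, R_J) = (R_{1I} + q^{|I|} R_{1▷I}) R_J / (q^{|I|+|J|+1} - 1), where 1▷I means the composition (1+i_1, i_2, ..., i_r). Consequently, the coefficients of g̃_n = (q;q)_n g_n on the ribbon basis lie in ℕ[q]. -/

import Mathlib

noncomputable section

open Finset

/-- Noncommutative symmetric functions over `ℚ(q)`: the monoid algebra of the free monoid
on integer letters; the word `I` indexes `S^I`. -/
abbrev NSym := MonoidAlgebra (RatFunc ℚ) (FreeMonoid ℕ)

/-- `S^I` for a word `I`. -/
def Sw (l : List ℕ) : NSym := MonoidAlgebra.single (FreeMonoid.ofList l) 1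

/-- The operator `Ω` on words: first part increased by 1 (`Ω S^∅ = S_1`); for a
composition `I`, `omegaW I` is also the composition `1 ▷ I = (1+i_1, i_2, …, i_r)`. -/
def omegaW : List ℕ → List ℕ
  | [] => [1]
  | a :: l => (a + 1) :: l

/-- All coarsenings of a composition (merging consecutive parts in all possible ways). -/
def coars : List ℕ → List (List ℕ)
  | [] => [[]]
  | [a] => [[a]]
  | a :: b :: l => ((coars (b :: l)).map (a :: ·)) ++ coars ((a + b) :: l)

/-- The ribbon basis expanded on the complete basis:
`R_I = Σ_{J coarser than I} (-1)^{ℓ(I)-ℓ(J)} S^J`. -/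
def Rib (I : List ℕ) : NSym :=
  ((coars I).map fun J => ((-1 : RatFunc ℚ) ^ (I.length - J.length)) • Sw J).sum

/-- The bilinear map `B_q` on the complete basis. -/
def Bq (x y : NSym) : NSym :=
  Finsupp.sum x.coeff fun I a => Finsupp.sum y.coeff fun J b =>
    (a * b * ((RatFunc.X : RatFunc ℚ) ^ (I.toList.sum + J.toList.sum + 1) - 1)⁻¹) •
      (Sw (1 :: (I.toList ++ J.toList)) +
        ((RatFunc.X : RatFunc ℚ) ^ I.toList.sum - 1) • Sw (omegaW (I.toList ++ J.toList)))

/-- `(q;q)_n = (q-1)(q^2-1)⋯(q^n-1)` with `q = X`. -/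
def qPoch (n : ℕ) : RatFunc ℚ := ∏ k ∈ Finset.Icc 1 n, ((RatFunc.X : RatFunc ℚ) ^ k - 1)

/-- The canonical image of a polynomial with natural coefficients in `ℚ(q)`. -/
def natPoly (p : Polynomial ℕ) : RatFunc ℚ :=
  algebraMap (Polynomial ℚ) (RatFunc ℚ) (p.map (Nat.castRingHom ℚ))

/-!
On homogeneous elements `x`, `y` of degrees `a`, `b`,
`B_q(x, y) = (q^{a+b+1} - 1)⁻¹ (S_1 x + (q^a - 1) Ω x) y`, because `Ω (S^I S^J) = (Ω S^I) S^J`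
except for `I = ∅`, where the factor `q^a - 1` vanishes. For `x = R_I` the ribbon product rule
`R_I R_J = R_{IJ} + R_{I▷J}` gives `S_1 R_I = R_{1I} + R_{1▷I}`, and `Ω R_I = R_{1▷I}`, whence the
ribbon formula.

For positivity, `(q;q)_{a+b+1} / ((q;q)_a (q;q)_b (q^{a+b+1} - 1))` is the Gaussian binomial
`[a+b choose a]_q ∈ ℕ[q]`, and by the two facts above the `ℕ[q]`-combinations of ribbons are
closed under products and under `x ↦ S_1 x + (q^a - 1) Ω x`; induction on `n` concludes.
-/

local notation "q" => (RatFunc.X : RatFunc ℚ)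

lemma Sw_nil : Sw [] = 1 := rfl

lemma Sw_mul (K L : List ℕ) : Sw K * Sw L = Sw (K ++ L) := by
  simp [Sw, MonoidAlgebra.single_mul_single]

lemma sum_of_mem_coars {I K : List ℕ} (hK : K ∈ coars I) : K.sum = I.sum := by
  induction I using coars.induct generalizing K with
  | case1 | case2 => simp_all [coars]
  | case3 a b l ih₁ ih₂ =>
    rw [coars, List.mem_append, List.mem_map] at hK
    rcases hK with ⟨K', hK', rfl⟩ | hK
    · simp [ih₁ hK']
    · simp [ih₂ hK, add_assoc]

lemma length_le_of_mem_coars {I K : List ℕ} (hK : K ∈ coars I) : K.length ≤ I.length := by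
  induction I using coars.induct generalizing K with
  | case1 | case2 => simp_all [coars]
  | case3 a b l ih₁ ih₂ =>
    rw [coars, List.mem_append, List.mem_map] at hK
    rcases hK with ⟨K', hK', rfl⟩ | hK
    · simpa using ih₁ hK'
    · simpa using (ih₂ hK).trans (Nat.le_succ _)

lemma ne_nil_of_mem_coars {I K : List ℕ} (hK : K ∈ coars I) (hI : I ≠ []) : K ≠ [] := by
  induction I using coars.induct generalizing K with
  | case1 => contradiction
  | case2 => simp_all [coars]
  | case3 a b l ih₁ ih₂ =>
    rw [coars, List.mem_append, List.mem_map] at hK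
    rcases hK with ⟨K', hK', rfl⟩ | hK
    · simp
    · exact ih₂ hK (List.cons_ne_nil _ _)

lemma coars_omegaW (I : List ℕ) : coars (omegaW I) = (coars I).map omegaW := by
  induction I using coars.induct with
  | case1 | case2 => simp [coars, omegaW]
  | case3 a b l ih₁ ih₂ =>
    simp only [omegaW] at ih₂ ⊢
    rw [coars, coars, List.map_append, List.map_map, Nat.add_right_comm, ih₂]
    rfl

/-- `glue I J` is the paper's `I ▷ J`. -/
def glue : List ℕ → List ℕ → List ℕ
  | [], B => B
  | [a], [] => [a]
  | [a], b :: B => (a + b) :: B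
  | a :: x :: A, B => a :: glue (x :: A) B

lemma glue_cons_ne_nil (x : ℕ) (A B : List ℕ) : glue (x :: A) B ≠ [] := by
  match A, B with
  | [], [] | [], _ :: _ | _ :: _, _ => simp [glue]

lemma glue_singleton_glue (a x : ℕ) (A B : List ℕ) :
    glue [a] (glue (x :: A) B) = glue ((a + x) :: A) B := by
  match A, B with
  | [], [] => rfl
  | [], b :: B => simp [glue, add_assoc]
  | y :: A, B => rfl

lemma glue_one_left (B : List ℕ) : glue [1] B = omegaW B := by
  cases B <;> simp [glue, omegaW, add_comm]

lemma sum_glue (A B : List ℕ) : (glue A B).sum = A.sum + B.sum := by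
  induction A, B using glue.induct <;> simp_all [glue, add_assoc]

lemma glue_pos {A B : List ℕ} (hA : ∀ i ∈ A, 0 < i) (hB : ∀ i ∈ B, 0 < i) :
    ∀ i ∈ glue A B, 0 < i := by
  induction A, B using glue.induct <;> simp_all [glue]

lemma Rib_nil : Rib [] = 1 := by
  simp [Rib, coars, Sw_nil]

lemma Rib_singleton (a : ℕ) : Rib [a] = Sw [a] := by
  simp [Rib, coars]

lemma Sw_singleton_mul_Rib (a : ℕ) {B : List ℕ} (hB : B ≠ []) :
    Sw [a] * Rib B = Rib (a :: B) + Rib (glue [a] B) := by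
  obtain ⟨b, l, rfl⟩ := List.exists_cons_of_ne_nil hB
  have hmerge : ((coars ((a + b) :: l)).map fun K =>
      (-1 : RatFunc ℚ) ^ ((a :: b :: l).length - K.length) • Sw K).sum = -Rib ((a + b) :: l) := by
    rw [Rib, ← neg_one_smul (RatFunc ℚ) (List.sum _), List.smul_sum, List.map_map]
    refine congrArg List.sum (List.map_congr_left fun K hK => ?_)
    have := length_le_of_mem_coars hK
    simp only [List.length_cons, Function.comp_apply, smul_smul] at this ⊢
    rw [Nat.sub_add_comm (by omega), pow_succ, mul_comm]
  rw [show glue [a] (b :: l) = (a + b) :: l from rfl, ← sub_neg_eq_add, ← hmerge]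
  unfold Rib
  rw [coars.eq_3, List.map_append, List.sum_append, List.map_map, ← List.sum_map_mul_left]
  simp only [Function.comp_def, List.length_cons, Nat.add_sub_add_right, mul_smul_comm,
    Sw_mul, List.singleton_append]
  abel

lemma Rib_cons_cons (a x : ℕ) (A : List ℕ) :
    Rib (a :: x :: A) = Sw [a] * Rib (x :: A) - Rib ((a + x) :: A) := by
  rw [Sw_singleton_mul_Rib a (List.cons_ne_nil x A)]
  simp [glue]

theorem Rib_mul {B : List ℕ} (hB : B ≠ []) :
    ∀ {A : List ℕ}, A ≠ [] → Rib A * Rib B = Rib (A ++ B) + Rib (glue A B)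
  | [a], _ => by rw [Rib_singleton, Sw_singleton_mul_Rib a hB]; rfl
  | a :: x :: A, _ => by
    rw [Rib_cons_cons, sub_mul, mul_assoc, Rib_mul hB (List.cons_ne_nil x A),
      Rib_mul hB (List.cons_ne_nil (a + x) A), mul_add, List.cons_append, List.cons_append,
      Sw_singleton_mul_Rib a (List.cons_ne_nil _ _),
      Sw_singleton_mul_Rib a (glue_cons_ne_nil x A B), glue_singleton_glue]
    simp only [glue, List.cons_append]
    abel
termination_by A => A.length

def omegaOp : NSym →ₗ[RatFunc ℚ] NSym :=
  MonoidAlgebra.mapDomainLinearMap (RatFunc ℚ) (RatFunc ℚ) fun w =>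
    FreeMonoid.ofList (omegaW w.toList)

lemma omegaOp_Sw (K : List ℕ) : omegaOp (Sw K) = Sw (omegaW K) := by
  simp [omegaOp, Sw]

lemma omegaOp_Rib {I : List ℕ} (hI : I ≠ []) : omegaOp (Rib I) = Rib (omegaW I) := by
  rw [Rib, Rib, map_list_sum, coars_omegaW, List.map_map, List.map_map]
  refine congrArg List.sum (List.map_congr_left fun K hK => ?_)
  obtain ⟨a, I, rfl⟩ := List.exists_cons_of_ne_nil hI
  obtain ⟨k, K, rfl⟩ := List.exists_cons_of_ne_nil (ne_nil_of_mem_coars hK hI)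
  simp [omegaOp_Sw, omegaW]

def homog (a : ℕ) : Submodule (RatFunc ℚ) NSym :=
  Submodule.span (RatFunc ℚ) (Sw '' {K | K.sum = a})

lemma Rib_mem_homog (I : List ℕ) : Rib I ∈ homog I.sum :=
  list_sum_mem fun _ hx => by
    obtain ⟨K, hK, rfl⟩ := List.mem_map.mp hx
    exact Submodule.smul_mem _ _ (Submodule.subset_span ⟨K, sum_of_mem_coars hK, rfl⟩)

lemma Bq_add_left (x x' y : NSym) : Bq (x + x') y = Bq x y + Bq x' y := by
  unfold Bq
  rw [MonoidAlgebra.coeff_add, Finsupp.sum_add_index']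
  · intro i; simp
  · intros; simp [add_mul, add_smul, Finsupp.sum_add]; abel

lemma Bq_smul_left (c : RatFunc ℚ) (x y : NSym) : Bq (c • x) y = c • Bq x y := by
  unfold Bq
  rw [MonoidAlgebra.coeff_smul, Finsupp.sum_smul_index (by simp), Finsupp.smul_sum]
  refine Finsupp.sum_congr fun I _ => ?_
  rw [Finsupp.smul_sum]
  refine Finsupp.sum_congr fun J _ => ?_
  rw [smul_smul, mul_assoc, mul_assoc, mul_assoc]

lemma Bq_add_right (x y y' : NSym) : Bq x (y + y') = Bq x y + Bq x y' := by
  unfold Bq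
  rw [MonoidAlgebra.coeff_add, ← Finsupp.sum_add]
  refine Finsupp.sum_congr fun I _ => ?_
  rw [Finsupp.sum_add_index']
  · intro i; simp
  · intros; simp [mul_add, add_mul, add_smul]; abel

lemma Bq_smul_right (c : RatFunc ℚ) (x y : NSym) : Bq x (c • y) = c • Bq x y := by
  unfold Bq
  rw [MonoidAlgebra.coeff_smul, Finsupp.smul_sum]
  refine Finsupp.sum_congr fun I _ => ?_
  rw [Finsupp.sum_smul_index (by simp), Finsupp.smul_sum]
  refine Finsupp.sum_congr fun J _ => ?_
  rw [smul_smul]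
  ring_nf

def BqLin : NSym →ₗ[RatFunc ℚ] NSym →ₗ[RatFunc ℚ] NSym :=
  LinearMap.mk₂ _ Bq Bq_add_left Bq_smul_left Bq_add_right Bq_smul_right

lemma Bq_Sw_Sw (K L : List ℕ) :
    Bq (Sw K) (Sw L) = (q ^ (K.sum + L.sum + 1) - 1)⁻¹ •
      (Sw (1 :: (K ++ L)) + (q ^ K.sum - 1) • Sw (omegaW (K ++ L))) := by
  unfold Bq Sw
  rw [MonoidAlgebra.coeff_single, MonoidAlgebra.coeff_single, Finsupp.sum_single_index,
    Finsupp.sum_single_index] <;> simp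

def Lq (a : ℕ) : NSym →ₗ[RatFunc ℚ] NSym :=
  LinearMap.mulLeft (RatFunc ℚ) (Sw [1]) + (q ^ a - 1) • omegaOp

lemma Lq_apply (a : ℕ) (x : NSym) : Lq a x = Sw [1] * x + (q ^ a - 1) • omegaOp x := rfl

lemma Bq_Sw_Sw_eq_Lq (K L : List ℕ) :
    Bq (Sw K) (Sw L) = (q ^ (K.sum + L.sum + 1) - 1)⁻¹ • (Lq K.sum (Sw K) * Sw L) := by
  cases K with
  | nil => simp [Bq_Sw_Sw, Lq_apply, Sw_mul]
  | cons k K => simp [Bq_Sw_Sw, Lq_apply, omegaOp_Sw, Sw_mul, omegaW, add_mul]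

theorem Bq_eq_Lq_mul {a b : ℕ} {x y : NSym} (hx : x ∈ homog a) (hy : y ∈ homog b) :
    Bq x y = (q ^ (a + b + 1) - 1)⁻¹ • (Lq a x * y) := by
  let F : NSym →ₗ[RatFunc ℚ] NSym →ₗ[RatFunc ℚ] NSym :=
    (q ^ (a + b + 1) - 1)⁻¹ • (LinearMap.mul (RatFunc ℚ) NSym) ∘ₗ Lq a
  have hgen : ∀ K, K.sum = a → BqLin (Sw K) y = F (Sw K) y := by
    rintro K rfl
    refine LinearMap.eqOn_span ?_ hy
    rintro _ ⟨L, rfl, rfl⟩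
    exact Bq_Sw_Sw_eq_Lq K L
  refine LinearMap.eqOn_span (f := BqLin.flip y) (g := F.flip y) ?_ hx
  rintro _ ⟨K, hK, rfl⟩
  exact hgen K hK

lemma Lq_Rib {I : List ℕ} (hI : I ≠ []) :
    Lq I.sum (Rib I) = Rib (1 :: I) + q ^ I.sum • Rib (omegaW I) := by
  rw [Lq_apply, ← Rib_singleton, Rib_mul hI (List.cons_ne_nil 1 []), glue_one_left,
    omegaOp_Rib hI, sub_smul, one_smul, List.singleton_append]
  abel

theorem Bq_Rib_Rib {I : List ℕ} (J : List ℕ) (hI : I ≠ []) :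
    Bq (Rib I) (Rib J) = (q ^ (I.sum + J.sum + 1) - 1)⁻¹ •
      ((Rib (1 :: I) + q ^ I.sum • Rib (omegaW I)) * Rib J) := by
  rw [Bq_eq_Lq_mul (Rib_mem_homog I) (Rib_mem_homog J), Lq_Rib hI]

lemma natPoly_add (p p' : Polynomial ℕ) : natPoly (p + p') = natPoly p + natPoly p' := by
  simp [natPoly]

lemma natPoly_mul (p p' : Polynomial ℕ) : natPoly (p * p') = natPoly p * natPoly p' := by
  simp [natPoly]

lemma natPoly_X_pow (k : ℕ) : natPoly (Polynomial.X ^ k) = q ^ k := by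
  simp [natPoly]

def ribbonCone (n : ℕ) : AddSubmonoid NSym where
  carrier := {x | ∃ c : Composition n → Polynomial ℕ,
    x = ∑ I : Composition n, natPoly (c I) • Rib I.blocks}
  zero_mem' := ⟨0, by simp [natPoly]⟩
  add_mem' := by
    rintro _ _ ⟨c, rfl⟩ ⟨d, rfl⟩
    exact ⟨c + d, by simp [natPoly_add, add_smul, Finset.sum_add_distrib]⟩

lemma natPoly_smul_mem_ribbonCone {n : ℕ} {x : NSym} (p : Polynomial ℕ)
    (hx : x ∈ ribbonCone n) : natPoly p • x ∈ ribbonCone n := by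
  obtain ⟨c, rfl⟩ := hx
  exact ⟨fun I => p * c I, by simp [Finset.smul_sum, smul_smul, natPoly_mul]⟩

lemma Rib_mem_ribbonCone {L : List ℕ} (hL : ∀ i ∈ L, 0 < i) : Rib L ∈ ribbonCone L.sum := by
  refine ⟨fun I => if I.blocks = L then 1 else 0, ?_⟩
  have hsingle : ∀ I : Composition L.sum, I ≠ ⟨L, hL _, rfl⟩ → I.blocks ≠ L :=
    fun I hne hI => hne (Composition.ext hI)
  rw [Finset.sum_eq_single_of_mem ⟨L, hL _, rfl⟩ (Finset.mem_univ _)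
    fun I _ hne => by simp [hsingle I hne, natPoly]]
  simp [natPoly]

lemma Rib_mul_Rib_mem_ribbonCone {A B : List ℕ} (hA : ∀ i ∈ A, 0 < i) (hB : ∀ i ∈ B, 0 < i) :
    Rib A * Rib B ∈ ribbonCone (A.sum + B.sum) := by
  rcases eq_or_ne A [] with rfl | hA₀
  · simpa [Rib_nil] using Rib_mem_ribbonCone hB
  rcases eq_or_ne B [] with rfl | hB₀
  · simpa [Rib_nil] using Rib_mem_ribbonCone hA
  rw [Rib_mul hB₀ hA₀]
  refine add_mem ?_ ?_
  · simpa using Rib_mem_ribbonCone (L := A ++ B) fun i hi =>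
      (List.mem_append.mp hi).elim (hA i) (hB i)
  · simpa [sum_glue] using Rib_mem_ribbonCone (glue_pos hA hB)

lemma mul_mem_ribbonCone {m n : ℕ} {x y : NSym} (hx : x ∈ ribbonCone m)
    (hy : y ∈ ribbonCone n) : x * y ∈ ribbonCone (m + n) := by
  obtain ⟨c, rfl⟩ := hx
  obtain ⟨d, rfl⟩ := hy
  rw [Finset.sum_mul_sum]
  refine sum_mem fun I _ => sum_mem fun J _ => ?_
  rw [smul_mul_smul_comm, ← natPoly_mul]
  refine natPoly_smul_mem_ribbonCone _ ?_
  simpa [I.blocks_sum, J.blocks_sum] using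
    Rib_mul_Rib_mem_ribbonCone (fun _ => I.blocks_pos) (fun _ => J.blocks_pos)

lemma Lq_Rib_mem_ribbonCone {L : List ℕ} (hL : ∀ i ∈ L, 0 < i) :
    Lq L.sum (Rib L) ∈ ribbonCone (L.sum + 1) := by
  rcases eq_or_ne L [] with rfl | hL₀
  · simpa [Lq_apply, Rib_nil, Rib_singleton] using Rib_mem_ribbonCone (L := [1]) (by simp)
  rw [Lq_Rib hL₀, ← natPoly_X_pow, ← glue_one_left]
  refine add_mem ?_ (natPoly_smul_mem_ribbonCone _ ?_)
  · simpa [add_comm] using Rib_mem_ribbonCone (L := 1 :: L) (by simpa using hL)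
  · simpa [sum_glue, add_comm] using Rib_mem_ribbonCone (glue_pos (A := [1]) (by simp) hL)

lemma Lq_mem_ribbonCone {a : ℕ} {x : NSym} (hx : x ∈ ribbonCone a) :
    Lq a x ∈ ribbonCone (a + 1) := by
  obtain ⟨c, rfl⟩ := hx
  rw [map_sum]
  refine sum_mem fun I _ => ?_
  have hI := Lq_Rib_mem_ribbonCone fun _ => I.blocks_pos
  rw [I.blocks_sum] at hI
  rw [map_smul]
  exact natPoly_smul_mem_ribbonCone _ hI

lemma mem_homog_of_mem_ribbonCone {n : ℕ} {x : NSym} (hx : x ∈ ribbonCone n) :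
    x ∈ homog n := by
  obtain ⟨c, rfl⟩ := hx
  refine Submodule.sum_mem _ fun I _ => Submodule.smul_mem _ _ ?_
  simpa [I.blocks_sum] using Rib_mem_homog I.blocks

lemma RatFunc.X_pow_sub_one_ne_zero {K : Type*} [Field K] {k : ℕ} (hk : 0 < k) :
    (RatFunc.X : RatFunc K) ^ k - 1 ≠ 0 := by
  simpa using RatFunc.algebraMap_ne_zero (Polynomial.X_pow_sub_C_ne_zero hk (1 : K))

lemma qPoch_zero : qPoch 0 = 1 := rfl

lemma qPoch_succ (n : ℕ) : qPoch (n + 1) = qPoch n * (q ^ (n + 1) - 1) :=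
  Finset.prod_Icc_succ_top (Nat.le_add_left 1 n) _

lemma qPoch_ne_zero (n : ℕ) : qPoch n ≠ 0 :=
  Finset.prod_ne_zero_iff.mpr fun _ hk => RatFunc.X_pow_sub_one_ne_zero (Finset.mem_Icc.mp hk).1

/-- The Gaussian binomial coefficient `[m + n choose m]_q`, by the `q`-Pascal recurrence. -/
def qBinom : ℕ → ℕ → Polynomial ℕ
  | 0, _ => 1
  | _ + 1, 0 => 1
  | m + 1, n + 1 => qBinom m (n + 1) + Polynomial.X ^ (m + 1) * qBinom (m + 1) n
termination_by m n => m + n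

lemma natPoly_qBinom_mul (m n : ℕ) :
    natPoly (qBinom m n) * (qPoch m * qPoch n) = qPoch (m + n) := by
  induction m, n using qBinom.induct with
  | case1 n => simp [qBinom, natPoly, qPoch_zero]
  | case2 m => simp [qBinom, natPoly, qPoch_zero]
  | case3 m n ih₁ ih₂ =>
    rw [show m + (n + 1) = m + n + 1 by omega, qPoch_succ n] at ih₁
    rw [show m + 1 + n = m + n + 1 by omega, qPoch_succ m] at ih₂
    rw [qBinom, natPoly_add, natPoly_mul, natPoly_X_pow, qPoch_succ m, qPoch_succ n,
      show m + 1 + (n + 1) = m + n + 1 + 1 by omega, qPoch_succ (m + n + 1)]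
    linear_combination (q ^ (m + 1) - 1) * ih₁ + q ^ (m + 1) * (q ^ (n + 1) - 1) * ih₂

lemma qPoch_smul_Bq_mem_ribbonCone {a b : ℕ} {x y : NSym} (hx : x ∈ ribbonCone a)
    (hy : y ∈ ribbonCone b) :
    qPoch (a + b + 1) • Bq ((qPoch a)⁻¹ • x) ((qPoch b)⁻¹ • y) ∈ ribbonCone (a + b + 1) := by
  have hscalar : qPoch (a + b + 1) * ((qPoch a)⁻¹ * ((qPoch b)⁻¹ * (q ^ (a + b + 1) - 1)⁻¹)) =
      natPoly (qBinom a b) := by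
    rw [qPoch_succ, ← natPoly_qBinom_mul]
    field_simp [qPoch_ne_zero a, qPoch_ne_zero b,
      RatFunc.X_pow_sub_one_ne_zero (Nat.succ_pos (a + b))]
  rw [Bq_smul_left, Bq_smul_right,
    Bq_eq_Lq_mul (mem_homog_of_mem_ribbonCone hx) (mem_homog_of_mem_ribbonCone hy)]
  simp only [smul_smul]
  rw [hscalar, Nat.add_right_comm]
  exact natPoly_smul_mem_ribbonCone _ (mul_mem_ribbonCone (Lq_mem_ribbonCone hx) hy)

theorem qPoch_smul_mem_ribbonCone (g : ℕ → NSym) (h0 : g 0 = 1)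
    (hrec : ∀ n : ℕ, 1 ≤ n →
      g n = ∑ p ∈ Finset.HasAntidiagonal.antidiagonal (n - 1), Bq (g p.1) (g p.2)) (n : ℕ) :
    qPoch n • g n ∈ ribbonCone n := by
  induction n using Nat.strong_induction_on with
  | _ n ih =>
    cases n with
    | zero => simpa [qPoch_zero, h0, Rib_nil] using Rib_mem_ribbonCone (L := []) (by simp)
    | succ n =>
      rw [hrec (n + 1) n.succ_pos, Nat.add_sub_cancel, Finset.smul_sum]
      refine sum_mem fun ⟨i, j⟩ hij => ?_
      obtain rfl : i + j = n := Finset.HasAntidiagonal.mem_antidiagonal.mp hij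
      have h := qPoch_smul_Bq_mem_ribbonCone (ih i (by omega)) (ih j (by omega))
      rwa [inv_smul_smul₀ (qPoch_ne_zero i), inv_smul_smul₀ (qPoch_ne_zero j)] at h

/-- **Ribbon formula for `B_q` and positivity.** On the ribbon basis,
`B_q(R_I, R_J) = (R_{1I} + q^{|I|} R_{1▷I}) R_J / (q^{|I|+|J|+1} - 1)` for compositions
`I`, `J`; consequently, for the solution `g` of `g = 1 + B_q(g,g)`, the coefficients of
`g̃_n = (q;q)_n g_n` on the ribbon basis lie in `ℕ[q]`. -/
theorem Bq_ribbon_formula_and_positivity :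
    (∀ I J : List ℕ, I ≠ [] → J ≠ [] → (∀ i ∈ I, 1 ≤ i) → (∀ j ∈ J, 1 ≤ j) →
      Bq (Rib I) (Rib J) =
        ((RatFunc.X : RatFunc ℚ) ^ (I.sum + J.sum + 1) - 1)⁻¹ •
          ((Rib (1 :: I) + ((RatFunc.X : RatFunc ℚ) ^ I.sum) • Rib (omegaW I)) * Rib J)) ∧
    (∀ g : ℕ → NSym, g 0 = 1 →
      (∀ n : ℕ, 1 ≤ n →
        g n = ∑ p ∈ Finset.HasAntidiagonal.antidiagonal (n - 1), Bq (g p.1) (g p.2)) →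
      ∀ n : ℕ, ∃ c : Composition n → Polynomial ℕ,
        qPoch n • g n = ∑ I : Composition n, natPoly (c I) • Rib I.blocks) :=
  ⟨fun _ J hI _ _ _ => Bq_Rib_Rib J hI, qPoch_smul_mem_ribbonCone⟩
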